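/- arXiv:1004.4540 — 6 statements merged into one kernel-verified Lean document; each statement's English description precedes it below -/
import Mathlib

section
/- Let (A, E) be an exact category with enough projective objects and enough injective objects, with P and I the full subcategories of projective and injective objects respectively. Suppose P' ⊆ P and I' ⊆ I are full additive subcategories such that: (1) P' ∨ I = I' ∨ P, where X ∨ Y denotes the smallest full additive subcategory of A containing X and Y and closed under direct summands; (2) P' is covariantly finite in A (every object admits a left P'-approximation) and I' is contravariantly finite in A (every object admits a right I'-approximation); (3) the class of right I'-acyclic conflations coincides with the class of left P'-acyclic conflations; denote this class by E'. Then (A, E') is a Frobenius exact category; moreover the projective objects of (A, E') are exactly the objects of I' ∨ P and the injective objects of (A, E') are exactly the objects of P' ∨ I. -/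
universe v u

open CategoryTheory Limits

namespace Paper

variable {A : Type u} [Category.{v} A]

section Defs
variable [Preadditive A]

/-- `i` is a kernel of `d`. -/
def IsKer {X Y Z : A} (i : X ⟶ Y) (d : Y ⟶ Z) : Prop :=
  i ≫ d = 0 ∧ ∀ ⦃W : A⦄ (g : W ⟶ Y), g ≫ d = 0 → ∃! g' : W ⟶ X, g' ≫ i = g

/-- `d` is a cokernel of `i`. -/
def IsCoker {X Y Z : A} (i : X ⟶ Y) (d : Y ⟶ Z) : Prop :=
  i ≫ d = 0 ∧ ∀ ⦃W : A⦄ (g : Y ⟶ W), i ≫ g = 0 → ∃! g' : Z ⟶ W, d ≫ g' = g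

/-- An exact structure in the sense of Quillen (following Keller's axioms) on an
additive category `A`: a class of kernel-cokernel pairs (conflations), closed under
isomorphism, satisfying the axioms (Ex0), (Ex1), (Ex1op), (Ex2), (Ex2op). -/
structure ExactStructure (A : Type u) [Category.{v} A] [Preadditive A] where
  /-- the class of conflations `X ⟶ Y ⟶ Z` -/
  IsConflation : ∀ ⦃X Y Z : A⦄, (X ⟶ Y) → (Y ⟶ Z) → Prop
  ker_of_conflation : ∀ ⦃X Y Z : A⦄ {i : X ⟶ Y} {d : Y ⟶ Z}, IsConflation i d → IsKer i d
  coker_of_conflation : ∀ ⦃X Y Z : A⦄ {i : X ⟶ Y} {d : Y ⟶ Z}, IsConflation i d → IsCoker i d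
  iso_closed : ∀ ⦃X Y Z X' Y' Z' : A⦄ {i : X ⟶ Y} {d : Y ⟶ Z} {i' : X' ⟶ Y'} {d' : Y' ⟶ Z'}
    (eX : X ≅ X') (eY : Y ≅ Y') (eZ : Z ≅ Z'),
    i ≫ eY.hom = eX.hom ≫ i' → d ≫ eZ.hom = eY.hom ≫ d' →
    IsConflation i d → IsConflation i' d'
  ex0 : ∀ ⦃Z : A⦄, IsZero Z → ∃ (X : A) (i : X ⟶ Z), IsConflation i (𝟙 Z)
  ex1 : ∀ ⦃Y Z W : A⦄ {d : Y ⟶ Z} {e : Z ⟶ W},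
    (∃ (X : A) (i : X ⟶ Y), IsConflation i d) → (∃ (X : A) (i : X ⟶ Z), IsConflation i e) →
    ∃ (X : A) (i : X ⟶ Y), IsConflation i (d ≫ e)
  ex1op : ∀ ⦃X Y W : A⦄ {i : X ⟶ Y} {j : Y ⟶ W},
    (∃ (Z : A) (d : Y ⟶ Z), IsConflation i d) → (∃ (Z : A) (d : W ⟶ Z), IsConflation j d) →
    ∃ (Z : A) (d : W ⟶ Z), IsConflation (i ≫ j) d
  ex2 : ∀ ⦃Y Z Z' : A⦄ (d : Y ⟶ Z) (f : Z' ⟶ Z),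
    (∃ (X : A) (i : X ⟶ Y), IsConflation i d) →
    ∃ (Y' : A) (d' : Y' ⟶ Z') (f' : Y' ⟶ Y),
      IsPullback d' f' f d ∧ ∃ (X : A) (i : X ⟶ Y'), IsConflation i d'
  ex2op : ∀ ⦃X Y X' : A⦄ (i : X ⟶ Y) (f : X ⟶ X'),
    (∃ (Z : A) (d : Y ⟶ Z), IsConflation i d) →
    ∃ (Y' : A) (i' : X' ⟶ Y') (f' : Y ⟶ Y'),
      IsPushout i f f' i' ∧ ∃ (Z : A) (d : Y' ⟶ Z), IsConflation i' d

namespace ExactStructure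

variable (E : ExactStructure A)

/-- `d` is a deflation. -/
def IsDeflation {Y Z : A} (d : Y ⟶ Z) : Prop :=
  ∃ (X : A) (i : X ⟶ Y), E.IsConflation i d

/-- `i` is an inflation. -/
def IsInflation {X Y : A} (i : X ⟶ Y) : Prop :=
  ∃ (Z : A) (d : Y ⟶ Z), E.IsConflation i d

/-- projective object: every deflation onto it splits. -/
def Proj (P : A) : Prop :=
  ∀ ⦃Y : A⦄ (d : Y ⟶ P), E.IsDeflation d → ∃ s : P ⟶ Y, s ≫ d = 𝟙 P

/-- injective object: every inflation out of it splits. -/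
def Inj (I : A) : Prop :=
  ∀ ⦃Y : A⦄ (i : I ⟶ Y), E.IsInflation i → ∃ r : Y ⟶ I, i ≫ r = 𝟙 I

/-- enough projective objects -/
def EnoughProj : Prop :=
  ∀ X : A, ∃ (P : A) (d : P ⟶ X), E.Proj P ∧ E.IsDeflation d

/-- enough injective objects -/
def EnoughInj : Prop :=
  ∀ X : A, ∃ (I : A) (i : X ⟶ I), E.Inj I ∧ E.IsInflation i

/-- A Frobenius category: enough projectives, enough injectives, and the two classes coincide. -/
structure IsFrobenius : Prop where
  enoughProj : E.EnoughProj
  enoughInj : E.EnoughInj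
  proj_iff_inj : ∀ P : A, E.Proj P ↔ E.Inj P

end ExactStructure

end Defs

end Paper
namespace Paper

open CategoryTheory Limits

variable {A : Type u} [Category.{v} A] [Preadditive A]

/-- A conflation `X ⟶i Y ⟶d Z` is right `S`-acyclic if `Hom_A(S₀, -)` sends it to a
short exact sequence of abelian groups for every `S₀ ∈ S`. -/
def RightAcyclic (S : Set A) {X Y Z : A} (i : X ⟶ Y) (d : Y ⟶ Z) : Prop :=
  ∀ S₀ ∈ S, Function.Injective (fun g : S₀ ⟶ X => g ≫ i) ∧
    (∀ g : S₀ ⟶ Y, g ≫ d = 0 → ∃ g' : S₀ ⟶ X, g' ≫ i = g) ∧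
    (∀ g : S₀ ⟶ Z, ∃ g' : S₀ ⟶ Y, g' ≫ d = g)

/-- A conflation `X ⟶i Y ⟶d Z` is left `S`-acyclic if `Hom_A(-, S₀)` sends it to a
short exact sequence of abelian groups for every `S₀ ∈ S`. -/
def LeftAcyclic (S : Set A) {X Y Z : A} (i : X ⟶ Y) (d : Y ⟶ Z) : Prop :=
  ∀ S₀ ∈ S, Function.Injective (fun g : Z ⟶ S₀ => d ≫ g) ∧
    (∀ g : Y ⟶ S₀, i ≫ g = 0 → ∃ g' : Z ⟶ S₀, d ≫ g' = g) ∧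
    (∀ g : X ⟶ S₀, ∃ g' : Y ⟶ S₀, i ≫ g' = g)

/-- `S ∨ T`: the smallest full additive subcategory containing `S` and `T` and closed
under direct summands; for additive `S` and `T` its objects are exactly the direct
summands of the direct sums `X₀ ⊕ Y₀` with `X₀ ∈ S`, `Y₀ ∈ T`. -/
def Vee [HasBinaryBiproducts A] (S T : Set A) : Set A :=
  {Z | ∃ X₀ Y₀ : A, X₀ ∈ S ∧ Y₀ ∈ T ∧
    ∃ (s : Z ⟶ X₀ ⊞ Y₀) (r : X₀ ⊞ Y₀ ⟶ Z), s ≫ r = 𝟙 Z}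

end Paper
namespace Paper

open CategoryTheory Limits

/-!
A conflation of `E` is right `I'`-acyclic iff its deflation lifts every morphism out of `I'`,
a property stable under pullback, composition and isomorphism; by (3) it is equally the
condition that its inflation extends every morphism into `P'`, which is stable under pushout
and composition. Hence these conflations form an exact structure `E'`.

If `f : I₀ ⟶ X` is a right `I'`-approximation and `p : P₀ ⟶ X` an `E`-deflation with `P₀`
projective, then `[f p] : I₀ ⊞ P₀ ⟶ X` is an `E'`-deflation. Objects of `I'` and
`E`-projectives are `E'`-projective, so the `E'`-projectives are exactly the direct summands
of such `I₀ ⊞ P₀`, that is `I' ∨ P`, and there are enough of them. Dually the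
`E'`-injectives are `P' ∨ I`, and condition (1) makes the two classes equal.
-/

section KernelsCokernels

variable {A : Type u} [Category.{v} A] [Preadditive A] {X Y Z : A} {i : X ⟶ Y} {d : Y ⟶ Z}

theorem IsKer.cancel (h : IsKer i d) {W : A} {g₁ g₂ : W ⟶ X} (hg : g₁ ≫ i = g₂ ≫ i) :
    g₁ = g₂ :=
  (h.2 (g₁ ≫ i) (by rw [Category.assoc, h.1, comp_zero])).unique rfl hg.symm

theorem IsCoker.cancel (h : IsCoker i d) {W : A} {g₁ g₂ : Z ⟶ W} (hg : d ≫ g₁ = d ≫ g₂) :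
    g₁ = g₂ :=
  (h.2 (d ≫ g₁) (by rw [← Category.assoc, h.1, zero_comp])).unique rfl hg.symm

theorem rightAcyclic_iff {S : Set A} (h : IsKer i d) :
    RightAcyclic S i d ↔ ∀ S₀ ∈ S, ∀ g : S₀ ⟶ Z, ∃ g' : S₀ ⟶ Y, g' ≫ d = g := by
  refine ⟨fun hS S₀ hS₀ => (hS S₀ hS₀).2.2, fun hS S₀ hS₀ => ⟨fun _ _ => h.cancel, ?_, hS S₀ hS₀⟩⟩
  intro g hg
  obtain ⟨g', hg', -⟩ := h.2 g hg
  exact ⟨g', hg'⟩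

theorem leftAcyclic_iff {S : Set A} (h : IsCoker i d) :
    LeftAcyclic S i d ↔ ∀ S₀ ∈ S, ∀ g : X ⟶ S₀, ∃ g' : Y ⟶ S₀, i ≫ g' = g := by
  refine ⟨fun hS S₀ hS₀ => (hS S₀ hS₀).2.2, fun hS S₀ hS₀ => ⟨fun _ _ => h.cancel, ?_, hS S₀ hS₀⟩⟩
  intro g hg
  obtain ⟨g', hg', -⟩ := h.2 g hg
  exact ⟨g', hg'⟩

theorem isCoker_biprod_inl_snd (W Z : A) [HasBinaryBiproduct W Z] :
    IsCoker (biprod.inl : W ⟶ W ⊞ Z) (biprod.snd : W ⊞ Z ⟶ Z) := by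
  refine ⟨biprod.inl_snd, fun T g hg => ⟨biprod.inr ≫ g, ?_, fun g' hg' => ?_⟩⟩
  · apply biprod.hom_ext' <;> simp [hg]
  · rw [← hg', biprod.inr_snd_assoc]

end KernelsCokernels

section BiprodMap

variable {A : Type u} [Category.{v} A] [Preadditive A] [HasBinaryBiproducts A]

theorem isPullback_biprod_map {W Y Z : A} (p : Y ⟶ Z) :
    IsPullback (biprod.map (𝟙 W) p) biprod.snd biprod.snd p := by
  refine IsPullback.of_isLimit' ⟨biprod.map_snd _ _⟩ (PullbackCone.IsLimit.mk _
    (fun s => biprod.lift (s.fst ≫ biprod.fst) s.snd) (fun s => ?_) (fun s => by simp)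
    (fun s m hm₁ hm₂ => ?_))
  · apply biprod.hom_ext <;> simp [s.condition]
  · apply biprod.hom_ext
    · simpa using congrArg (· ≫ biprod.fst) hm₁
    · simpa using hm₂

theorem isPushout_biprod_map {W X Y : A} (j : X ⟶ Y) :
    IsPushout j biprod.inr biprod.inr (biprod.map (𝟙 W) j) := by
  refine IsPushout.of_isColimit' ⟨(biprod.inr_map _ _).symm⟩ (PushoutCocone.IsColimit.mk _
    (fun s => biprod.desc (biprod.inl ≫ s.inr) s.inl) (fun s => by simp) (fun s => ?_)
    (fun s m hm₁ hm₂ => ?_))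
  · apply biprod.hom_ext' <;> simp [s.condition]
  · apply biprod.hom_ext'
    · simpa using congrArg (biprod.inl ≫ ·) hm₂
    · simpa using hm₁

end BiprodMap

namespace ExactStructure

variable {A : Type u} [Category.{v} A] [Preadditive A] (E : ExactStructure A)

theorem isConflation_of_isCoker {X Y Z Z' : A} {i : X ⟶ Y} {d : Y ⟶ Z} {d' : Y ⟶ Z'}
    (h : E.IsConflation i d) (hd' : IsCoker i d') : E.IsConflation i d' := by
  have hd := E.coker_of_conflation h
  obtain ⟨u, hu, -⟩ := hd.2 d' hd'.1
  obtain ⟨v, hv, -⟩ := hd'.2 d hd.1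
  let e : Z ≅ Z' :=
    { hom := u, inv := v
      hom_inv_id := hd.cancel (by rw [reassoc_of% hu, hv, Category.comp_id])
      inv_hom_id := hd'.cancel (by rw [reassoc_of% hv, hu, Category.comp_id]) }
  exact E.iso_closed (Iso.refl _) (Iso.refl _) e (by simp) (by simpa [e] using hu) h

theorem isDeflation_iso_comp {Y' Y Z : A} (e : Y' ≅ Y) {d : Y ⟶ Z} (hd : E.IsDeflation d) :
    E.IsDeflation (e.hom ≫ d) := by
  obtain ⟨X, i, h⟩ := hd
  exact ⟨X, i ≫ e.inv, E.iso_closed (Iso.refl _) e.symm (Iso.refl _) (by simp) (by simp) h⟩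

theorem isInflation_comp_iso {X Y Y' : A} {i : X ⟶ Y} (hi : E.IsInflation i) (e : Y ≅ Y') :
    E.IsInflation (i ≫ e.hom) := by
  obtain ⟨Z, d, h⟩ := hi
  exact ⟨Z, e.inv ≫ d, E.iso_closed (Iso.refl _) e (Iso.refl _) (by simp) (by simp) h⟩

theorem isDeflation_of_isPullback {Y Z Z' Y' : A} {d : Y ⟶ Z} {f : Z' ⟶ Z} {d' : Y' ⟶ Z'}
    {f' : Y' ⟶ Y} (hpb : IsPullback d' f' f d) (hd : E.IsDeflation d) : E.IsDeflation d' := by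
  obtain ⟨Y₀, d₀, f₀, hpb₀, hd₀⟩ := E.ex2 d f hd
  simpa using E.isDeflation_iso_comp (hpb.isoIsPullback _ _ hpb₀) hd₀

theorem isInflation_of_isPushout {X Y X' Y' : A} {i : X ⟶ Y} {f : X ⟶ X'} {f' : Y ⟶ Y'}
    {i' : X' ⟶ Y'} (hpo : IsPushout i f f' i') (hi : E.IsInflation i) : E.IsInflation i' := by
  obtain ⟨Y₀, i₀, f₀, hpo₀, hi₀⟩ := E.ex2op i f hi
  simpa using E.isInflation_comp_iso hi₀ (hpo₀.isoIsPushout _ _ hpo)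

theorem exists_lift_of_proj {P Y Z : A} (hP : E.Proj P) {d : Y ⟶ Z} (hd : E.IsDeflation d)
    (g : P ⟶ Z) : ∃ l : P ⟶ Y, l ≫ d = g := by
  obtain ⟨Y', d', f', hpb, hd'⟩ := E.ex2 d g hd
  obtain ⟨s, hs⟩ := hP d' hd'
  exact ⟨s ≫ f', by rw [Category.assoc, ← hpb.w, reassoc_of% hs]⟩

theorem exists_extend_of_inj {I X Y : A} (hI : E.Inj I) {i : X ⟶ Y} (hi : E.IsInflation i)
    (g : X ⟶ I) : ∃ t : Y ⟶ I, i ≫ t = g := by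
  obtain ⟨Y', i', f', hpo, hi'⟩ := E.ex2op i g hi
  obtain ⟨r, hr⟩ := hI i' hi'
  exact ⟨f' ≫ r, by rw [← Category.assoc, hpo.w, Category.assoc, hr, Category.comp_id]⟩

theorem proj_of_retract {X Y : A} (hY : E.Proj Y) (s : X ⟶ Y) (r : Y ⟶ X) (hsr : s ≫ r = 𝟙 X) :
    E.Proj X := by
  intro W d hd
  obtain ⟨l, hl⟩ := E.exists_lift_of_proj hY hd r
  exact ⟨s ≫ l, by rw [Category.assoc, hl, hsr]⟩

theorem inj_of_retract {X Y : A} (hY : E.Inj Y) (s : X ⟶ Y) (r : Y ⟶ X) (hsr : s ≫ r = 𝟙 X) :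
    E.Inj X := by
  intro W i hi
  obtain ⟨t, ht⟩ := E.exists_extend_of_inj hY hi s
  exact ⟨t ≫ r, by rw [← Category.assoc, ht, hsr]⟩

section ZeroObject

variable [HasZeroObject A]

open ZeroObject

theorem isDeflation_id (Y : A) : E.IsDeflation (𝟙 Y) :=
  E.isDeflation_of_isPullback
    (IsPullback.of_horiz_isIso ⟨by simp⟩ : IsPullback (𝟙 Y) (0 : Y ⟶ 0) 0 (𝟙 0))
    (E.ex0 (isZero_zero A))

theorem isInflation_zero (Y : A) : E.IsInflation (0 : 0 ⟶ Y) := by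
  obtain ⟨X, i, h⟩ := E.isDeflation_id Y
  have hX : IsZero X := by
    rw [IsZero.iff_id_eq_zero]
    exact (E.ker_of_conflation h).cancel (by simpa using (E.ker_of_conflation h).1)
  exact ⟨Y, 𝟙 Y, E.iso_closed (hX.iso (isZero_zero A)) (Iso.refl _) (Iso.refl _)
    (hX.eq_of_src _ _) rfl h⟩

end ZeroObject

variable [HasBinaryBiproducts A]

theorem proj_biprod {X Y : A} (hX : E.Proj X) (hY : E.Proj Y) : E.Proj (X ⊞ Y) := by
  intro W d hd
  obtain ⟨l₁, hl₁⟩ := E.exists_lift_of_proj hX hd biprod.inl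
  obtain ⟨l₂, hl₂⟩ := E.exists_lift_of_proj hY hd biprod.inr
  exact ⟨biprod.desc l₁ l₂, by ext <;> simp [hl₁, hl₂]⟩

theorem inj_biprod {X Y : A} (hX : E.Inj X) (hY : E.Inj Y) : E.Inj (X ⊞ Y) := by
  intro W i hi
  obtain ⟨t₁, ht₁⟩ := E.exists_extend_of_inj hX hi biprod.fst
  obtain ⟨t₂, ht₂⟩ := E.exists_extend_of_inj hY hi biprod.snd
  exact ⟨biprod.lift t₁ t₂, by ext <;> simp [ht₁, ht₂]⟩

theorem proj_of_mem_vee {S T : Set A} (hS : ∀ X ∈ S, E.Proj X) (hT : ∀ X ∈ T, E.Proj X)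
    {X : A} (hX : X ∈ Vee S T) : E.Proj X := by
  obtain ⟨X₀, Y₀, hX₀, hY₀, s, r, hsr⟩ := hX
  exact E.proj_of_retract (E.proj_biprod (hS X₀ hX₀) (hT Y₀ hY₀)) s r hsr

theorem inj_of_mem_vee {S T : Set A} (hS : ∀ X ∈ S, E.Inj X) (hT : ∀ X ∈ T, E.Inj X)
    {X : A} (hX : X ∈ Vee S T) : E.Inj X := by
  obtain ⟨X₀, Y₀, hX₀, hY₀, s, r, hsr⟩ := hX
  exact E.inj_of_retract (E.inj_biprod (hS X₀ hX₀) (hT Y₀ hY₀)) s r hsr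

variable [HasZeroObject A]

theorem isConflation_biprod_inl_snd (W Z : A) :
    E.IsConflation (biprod.inl : W ⟶ W ⊞ Z) biprod.snd := by
  obtain ⟨T, d, h⟩ :=
    E.isInflation_of_isPushout (IsPushout.of_has_biproduct W Z).flip (E.isInflation_zero Z)
  exact E.isConflation_of_isCoker h (isCoker_biprod_inl_snd W Z)

theorem isInflation_biprod_inr (W Z : A) : E.IsInflation (biprod.inr : Z ⟶ W ⊞ Z) :=
  E.isInflation_of_isPushout (IsPushout.of_has_biproduct W Z) (E.isInflation_zero W)

theorem isDeflation_biprod_desc {W Y X : A} (f : W ⟶ X) {p : Y ⟶ X} (hp : E.IsDeflation p) :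
    E.IsDeflation (biprod.desc f p) := by
  have hshear : E.IsDeflation (biprod.desc f (𝟙 X)) := by
    convert E.isDeflation_iso_comp (Biprod.unipotentUpper f)
      ⟨_, _, E.isConflation_biprod_inl_snd W X⟩
    ext <;> simp [Biprod.ofComponents]
  have hmap := E.isDeflation_of_isPullback (isPullback_biprod_map (W := W) p) hp
  rw [show biprod.desc f p = biprod.map (𝟙 W) p ≫ biprod.desc f (𝟙 X) by ext <;> simp]
  exact E.ex1 hmap hshear

theorem isInflation_biprod_lift {X W Y : A} (f : X ⟶ W) {j : X ⟶ Y} (hj : E.IsInflation j) :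
    E.IsInflation (biprod.lift f j) := by
  have hshear : E.IsInflation (biprod.lift f (𝟙 X)) := by
    convert E.isInflation_comp_iso (E.isInflation_biprod_inr W X) (Biprod.unipotentLower f)
    ext <;> simp [Biprod.ofComponents]
  have hmap := E.isInflation_of_isPushout (isPushout_biprod_map (W := W) j) hj
  rw [show biprod.lift f j = biprod.lift f (𝟙 X) ≫ biprod.map (𝟙 W) j by ext <;> simp]
  exact E.ex1op hshear hmap

end ExactStructure

section AcyclicStructure

variable {A : Type u} [Category.{v} A] [Preadditive A]

def acyclicStructure (E : ExactStructure A) (P' I' : Set A)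
    (h3 : ∀ ⦃X Y Z : A⦄ (i : X ⟶ Y) (d : Y ⟶ Z), E.IsConflation i d →
      (RightAcyclic I' i d ↔ LeftAcyclic P' i d)) : ExactStructure A where
  IsConflation _ _ _ i d := E.IsConflation i d ∧ RightAcyclic I' i d
  ker_of_conflation _ _ _ _ _ h := E.ker_of_conflation h.1
  coker_of_conflation _ _ _ _ _ h := E.coker_of_conflation h.1
  iso_closed := by
    intro X Y Z X' Y' Z' i d i' d' eX eY eZ hi hd ⟨h, hI'⟩
    have h' := E.iso_closed eX eY eZ hi hd h
    refine ⟨h', (rightAcyclic_iff (E.ker_of_conflation h')).mpr fun S₀ hS₀ g => ?_⟩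
    obtain ⟨l, hl⟩ := (hI' S₀ hS₀).2.2 (g ≫ eZ.inv)
    exact ⟨l ≫ eY.hom, by rw [Category.assoc, ← hd, reassoc_of% hl, Iso.inv_hom_id,
      Category.comp_id]⟩
  ex0 := by
    intro Z hZ
    obtain ⟨X, i, h⟩ := E.ex0 hZ
    exact ⟨X, i, h, (rightAcyclic_iff (E.ker_of_conflation h)).mpr
      fun _ _ g => ⟨g, Category.comp_id g⟩⟩
  ex1 := by
    rintro Y Z W d e ⟨Xd, id, hd, hdI'⟩ ⟨Xe, ie, he, heI'⟩
    obtain ⟨X, i, h⟩ := E.ex1 ⟨Xd, id, hd⟩ ⟨Xe, ie, he⟩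
    refine ⟨X, i, h, (rightAcyclic_iff (E.ker_of_conflation h)).mpr fun S₀ hS₀ g => ?_⟩
    obtain ⟨g₁, hg₁⟩ := (heI' S₀ hS₀).2.2 g
    obtain ⟨g₂, hg₂⟩ := (hdI' S₀ hS₀).2.2 g₁
    exact ⟨g₂, by rw [← Category.assoc, hg₂, hg₁]⟩
  ex1op := by
    rintro X Y W i j ⟨Zi, di, hi, hiI'⟩ ⟨Zj, dj, hj, hjI'⟩
    obtain ⟨Z, d, h⟩ := E.ex1op ⟨Zi, di, hi⟩ ⟨Zj, dj, hj⟩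
    refine ⟨Z, d, h, (h3 _ _ h).mpr ((leftAcyclic_iff (E.coker_of_conflation h)).mpr
      fun S₀ hS₀ g => ?_)⟩
    obtain ⟨g₁, hg₁⟩ := ((h3 _ _ hi).mp hiI' S₀ hS₀).2.2 g
    obtain ⟨g₂, hg₂⟩ := ((h3 _ _ hj).mp hjI' S₀ hS₀).2.2 g₁
    exact ⟨g₂, by rw [Category.assoc, hg₂, hg₁]⟩
  ex2 := by
    rintro Y Z Z' d f ⟨X, i, h, hI'⟩
    obtain ⟨Y', d', f', hpb, X', i', h'⟩ := E.ex2 d f ⟨X, i, h⟩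
    refine ⟨Y', d', f', hpb, X', i', h', (rightAcyclic_iff (E.ker_of_conflation h')).mpr
      fun S₀ hS₀ g => ?_⟩
    obtain ⟨l, hl⟩ := (hI' S₀ hS₀).2.2 (g ≫ f)
    exact ⟨hpb.lift g l hl.symm, hpb.lift_fst _ _ _⟩
  ex2op := by
    rintro X Y X' i f ⟨Z, d, h, hI'⟩
    obtain ⟨Y', i', f', hpo, Z', d', h'⟩ := E.ex2op i f ⟨Z, d, h⟩
    refine ⟨Y', i', f', hpo, Z', d', h', (h3 _ _ h').mpr
      ((leftAcyclic_iff (E.coker_of_conflation h')).mpr fun S₀ hS₀ g => ?_)⟩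
    obtain ⟨l, hl⟩ := ((h3 _ _ h).mp hI' S₀ hS₀).2.2 (f ≫ g)
    exact ⟨hpo.desc l g hl, hpo.inr_desc _ _ _⟩

variable {E : ExactStructure A} {P' I' : Set A}
  {h3 : ∀ ⦃X Y Z : A⦄ (i : X ⟶ Y) (d : Y ⟶ Z), E.IsConflation i d →
    (RightAcyclic I' i d ↔ LeftAcyclic P' i d)}

theorem acyclicStructure_proj_of_mem {X : A} (hX : X ∈ I') :
    (acyclicStructure E P' I' h3).Proj X := by
  rintro Y d ⟨K, k, -, hI'⟩
  exact (hI' X hX).2.2 (𝟙 X)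

theorem acyclicStructure_inj_of_mem {X : A} (hX : X ∈ P') :
    (acyclicStructure E P' I' h3).Inj X := by
  rintro Y i ⟨C, c, h, hI'⟩
  exact ((h3 i c h).mp hI' X hX).2.2 (𝟙 X)

theorem acyclicStructure_proj_of_proj {X : A} (hX : E.Proj X) :
    (acyclicStructure E P' I' h3).Proj X := by
  rintro Y d ⟨K, k, h, -⟩
  exact hX d ⟨K, k, h⟩

theorem acyclicStructure_inj_of_inj {X : A} (hX : E.Inj X) :
    (acyclicStructure E P' I' h3).Inj X := by
  rintro Y i ⟨C, c, h, -⟩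
  exact hX i ⟨C, c, h⟩

variable [HasZeroObject A] [HasBinaryBiproducts A]

theorem acyclicStructure_isDeflation_biprod_desc {I₀ P₀ X : A} {f : I₀ ⟶ X}
    (hf : ∀ I₁ ∈ I', ∀ g : I₁ ⟶ X, ∃ t : I₁ ⟶ I₀, t ≫ f = g) {p : P₀ ⟶ X}
    (hp : E.IsDeflation p) : (acyclicStructure E P' I' h3).IsDeflation (biprod.desc f p) := by
  obtain ⟨K, k, h⟩ := E.isDeflation_biprod_desc f hp
  refine ⟨K, k, h, (rightAcyclic_iff (E.ker_of_conflation h)).mpr fun I₁ hI₁ g => ?_⟩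
  obtain ⟨t, ht⟩ := hf I₁ hI₁ g
  exact ⟨t ≫ biprod.inl, by simp [ht]⟩

theorem acyclicStructure_isInflation_biprod_lift {P₀ I₀ X : A} {f : X ⟶ P₀}
    (hf : ∀ P₁ ∈ P', ∀ g : X ⟶ P₁, ∃ t : P₀ ⟶ P₁, f ≫ t = g) {j : X ⟶ I₀}
    (hj : E.IsInflation j) : (acyclicStructure E P' I' h3).IsInflation (biprod.lift f j) := by
  obtain ⟨C, c, h⟩ := E.isInflation_biprod_lift f hj
  refine ⟨C, c, h, (h3 _ _ h).mpr ((leftAcyclic_iff (E.coker_of_conflation h)).mpr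
    fun P₁ hP₁ g => ?_)⟩
  obtain ⟨t, ht⟩ := hf P₁ hP₁ g
  exact ⟨biprod.fst ≫ t, by simp [ht]⟩

theorem acyclicStructure_enoughProj (hP : E.EnoughProj)
    (h2b : ∀ X : A, ∃ I₀ ∈ I', ∃ f : I₀ ⟶ X,
      ∀ I₁ ∈ I', ∀ g : I₁ ⟶ X, ∃ t : I₁ ⟶ I₀, t ≫ f = g) :
    (acyclicStructure E P' I' h3).EnoughProj := by
  intro X
  obtain ⟨I₀, hI₀, f, hf⟩ := h2b X
  obtain ⟨P₀, p, hP₀, hp⟩ := hP X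
  exact ⟨I₀ ⊞ P₀, biprod.desc f p, ExactStructure.proj_biprod _
    (acyclicStructure_proj_of_mem hI₀) (acyclicStructure_proj_of_proj hP₀),
    acyclicStructure_isDeflation_biprod_desc hf hp⟩

theorem acyclicStructure_enoughInj (hI : E.EnoughInj)
    (h2a : ∀ X : A, ∃ P₀ ∈ P', ∃ f : X ⟶ P₀,
      ∀ P₁ ∈ P', ∀ g : X ⟶ P₁, ∃ t : P₀ ⟶ P₁, f ≫ t = g) :
    (acyclicStructure E P' I' h3).EnoughInj := by
  intro X
  obtain ⟨P₀, hP₀, f, hf⟩ := h2a X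
  obtain ⟨I₀, j, hI₀, hj⟩ := hI X
  exact ⟨P₀ ⊞ I₀, biprod.lift f j, ExactStructure.inj_biprod _
    (acyclicStructure_inj_of_mem hP₀) (acyclicStructure_inj_of_inj hI₀),
    acyclicStructure_isInflation_biprod_lift hf hj⟩

theorem acyclicStructure_proj_iff (hP : E.EnoughProj)
    (h2b : ∀ X : A, ∃ I₀ ∈ I', ∃ f : I₀ ⟶ X,
      ∀ I₁ ∈ I', ∀ g : I₁ ⟶ X, ∃ t : I₁ ⟶ I₀, t ≫ f = g) (X : A) :
    (acyclicStructure E P' I' h3).Proj X ↔ X ∈ Vee I' {X : A | E.Proj X} := by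
  refine ⟨fun hX => ?_, ExactStructure.proj_of_mem_vee _ (fun _ => acyclicStructure_proj_of_mem)
    (fun _ => acyclicStructure_proj_of_proj)⟩
  obtain ⟨I₀, hI₀, f, hf⟩ := h2b X
  obtain ⟨P₀, p, hP₀, hp⟩ := hP X
  obtain ⟨s, hs⟩ := hX _ (acyclicStructure_isDeflation_biprod_desc hf hp)
  exact ⟨I₀, P₀, hI₀, hP₀, s, _, hs⟩

theorem acyclicStructure_inj_iff (hI : E.EnoughInj)
    (h2a : ∀ X : A, ∃ P₀ ∈ P', ∃ f : X ⟶ P₀,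
      ∀ P₁ ∈ P', ∀ g : X ⟶ P₁, ∃ t : P₀ ⟶ P₁, f ≫ t = g) (X : A) :
    (acyclicStructure E P' I' h3).Inj X ↔ X ∈ Vee P' {X : A | E.Inj X} := by
  refine ⟨fun hX => ?_, ExactStructure.inj_of_mem_vee _ (fun _ => acyclicStructure_inj_of_mem)
    (fun _ => acyclicStructure_inj_of_inj)⟩
  obtain ⟨P₀, hP₀, f, hf⟩ := h2a X
  obtain ⟨I₀, j, hI₀, hj⟩ := hI X
  obtain ⟨r, hr⟩ := hX _ (acyclicStructure_isInflation_biprod_lift hf hj)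
  exact ⟨P₀, I₀, hP₀, hI₀, _, r, hr⟩

end AcyclicStructure

theorem new_frobenius_structure_general
    {A : Type u} [Category.{v} A] [Preadditive A] [HasZeroObject A] [HasBinaryBiproducts A]
    (E : ExactStructure A) (hP : E.EnoughProj) (hI : E.EnoughInj)
    (P' I' : Set A)
    -- condition (1): `P' ∨ I = I' ∨ P`
    (h1 : Vee P' {X : A | E.Inj X} = Vee I' {X : A | E.Proj X})
    -- condition (2): `P'` covariantly finite, `I'` contravariantly finite
    (h2a : ∀ X : A, ∃ P₀ ∈ P', ∃ f : X ⟶ P₀,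
      ∀ P₁ ∈ P', ∀ g : X ⟶ P₁, ∃ t : P₀ ⟶ P₁, f ≫ t = g)
    (h2b : ∀ X : A, ∃ I₀ ∈ I', ∃ f : I₀ ⟶ X,
      ∀ I₁ ∈ I', ∀ g : I₁ ⟶ X, ∃ t : I₁ ⟶ I₀, t ≫ f = g)
    -- condition (3): right `I'`-acyclic = left `P'`-acyclic
    (h3 : ∀ ⦃X Y Z : A⦄ (i : X ⟶ Y) (d : Y ⟶ Z), E.IsConflation i d →
      (RightAcyclic I' i d ↔ LeftAcyclic P' i d)) :
    ∃ E' : ExactStructure A,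
      (∀ ⦃X Y Z : A⦄ (i : X ⟶ Y) (d : Y ⟶ Z),
        E'.IsConflation i d ↔ (E.IsConflation i d ∧ RightAcyclic I' i d)) ∧
      E'.IsFrobenius ∧
      (∀ X : A, E'.Proj X ↔ X ∈ Vee I' {X : A | E.Proj X}) ∧
      (∀ X : A, E'.Inj X ↔ X ∈ Vee P' {X : A | E.Inj X}) := by
  refine ⟨acyclicStructure E P' I' h3, fun _ _ _ _ _ => Iff.rfl,
    ⟨acyclicStructure_enoughProj hP h2b, acyclicStructure_enoughInj hI h2a, fun X => ?_⟩,
    acyclicStructure_proj_iff hP h2b, acyclicStructure_inj_iff hI h2a⟩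
  rw [acyclicStructure_proj_iff hP h2b, acyclicStructure_inj_iff hI h2a, h1]

/-- **Theorem 5.1.** Let `(A, E)` be an exact category with enough projectives and
enough injectives, `P` and `I` its subcategories of projective resp. injective
objects, and `P' ⊆ P`, `I' ⊆ I` full additive subcategories such that
(1) `P' ∨ I = I' ∨ P`; (2) `P'` is covariantly finite and `I'` is contravariantly
finite; (3) the right `I'`-acyclic conflations coincide with the left `P'`-acyclic
conflations.  Then this class `E'` of conflations makes `A` a Frobenius exact
category, whose projectives are exactly the objects of `I' ∨ P` and whose injectives
are exactly the objects of `P' ∨ I`. -/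
theorem new_frobenius_structure
    {A : Type u} [Category.{v} A] [Preadditive A] [HasZeroObject A] [HasBinaryBiproducts A]
    (E : ExactStructure A) (hP : E.EnoughProj) (hI : E.EnoughInj)
    (P' I' : Set A)
    (hP'sub : ∀ X ∈ P', E.Proj X) (hI'sub : ∀ X ∈ I', E.Inj X)
    -- `P'` and `I'` are additive subcategories
    (hP'zero : ∃ Z ∈ P', IsZero Z)
    (hP'sum : ∀ X Y : A, X ∈ P' → Y ∈ P' → ∃ W ∈ P', Nonempty (W ≅ X ⊞ Y))
    (hI'zero : ∃ Z ∈ I', IsZero Z)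
    (hI'sum : ∀ X Y : A, X ∈ I' → Y ∈ I' → ∃ W ∈ I', Nonempty (W ≅ X ⊞ Y))
    -- condition (1): `P' ∨ I = I' ∨ P`
    (h1 : Vee P' {X : A | E.Inj X} = Vee I' {X : A | E.Proj X})
    -- condition (2): `P'` covariantly finite, `I'` contravariantly finite
    (h2a : ∀ X : A, ∃ P₀ ∈ P', ∃ f : X ⟶ P₀,
      ∀ P₁ ∈ P', ∀ g : X ⟶ P₁, ∃ t : P₀ ⟶ P₁, f ≫ t = g)
    (h2b : ∀ X : A, ∃ I₀ ∈ I', ∃ f : I₀ ⟶ X,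
      ∀ I₁ ∈ I', ∀ g : I₁ ⟶ X, ∃ t : I₁ ⟶ I₀, t ≫ f = g)
    -- condition (3): right `I'`-acyclic = left `P'`-acyclic
    (h3 : ∀ ⦃X Y Z : A⦄ (i : X ⟶ Y) (d : Y ⟶ Z), E.IsConflation i d →
      (RightAcyclic I' i d ↔ LeftAcyclic P' i d)) :
    ∃ E' : ExactStructure A,
      (∀ ⦃X Y Z : A⦄ (i : X ⟶ Y) (d : Y ⟶ Z),
        E'.IsConflation i d ↔ (E.IsConflation i d ∧ RightAcyclic I' i d)) ∧
      E'.IsFrobenius ∧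
      (∀ X : A, E'.Proj X ↔ X ∈ Vee I' {X : A | E.Proj X}) ∧
      (∀ X : A, E'.Inj X ↔ X ∈ Vee P' {X : A | E.Inj X}) :=
  new_frobenius_structure_general E hP hI P' I' h1 h2a h2b h3

end Paper
end

section
/- Let (A, E) be an exact category and S ⊆ A a full additive subcategory. Let E' denote the class of right S-acyclic conflations, i.e., conflations η of E such that Hom_A(S, η) is a short exact sequence of abelian groups for every object S of S. Then (A, E') is an exact category. -/
universe v u

open CategoryTheory Limits

/-! For a conflation, `Hom(S₀, -)` is automatically left exact, so right `S`-acyclicity only asks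
that `Hom(S₀, d)` be surjective. This surjectivity passes to composites and pullbacks of
deflations and to isomorphic deflations, and pushing out an inflation does not change its
cokernel. For a composite inflation `i ≫ j` with cokernels `d`, `d''`, `d'`, the comparison map
`Z ⟶ Z''` is a kernel of `Z'' ⟶ Z'`, and a diagram chase gives surjectivity for `d''` from that
for `d` and `d'`. -/

namespace Paper

open CategoryTheory Limits

section Preadditive

variable {A : Type u} [Category.{v} A] [Preadditive A] {X Y Z : A}

lemma IsKer.cancel_mono {i : X ⟶ Y} {d : Y ⟶ Z} (h : IsKer i d) {W : A} {g g' : W ⟶ X}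
    (e : g ≫ i = g' ≫ i) : g = g' := by
  obtain ⟨u, -, hu⟩ := h.2 (g ≫ i) (by rw [Category.assoc, h.1, comp_zero])
  exact (hu g rfl).trans (hu g' e.symm).symm

lemma IsCoker.cancel_epi {i : X ⟶ Y} {d : Y ⟶ Z} (h : IsCoker i d) {W : A} {g g' : Z ⟶ W}
    (e : d ≫ g = d ≫ g') : g = g' := by
  obtain ⟨u, -, hu⟩ := h.2 (d ≫ g) (by rw [← Category.assoc, h.1, zero_comp])
  exact (hu g rfl).trans (hu g' e.symm).symm

lemma IsKer.exists_lift {i : X ⟶ Y} {d : Y ⟶ Z} (h : IsKer i d) {W : A} (g : W ⟶ Y)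
    (hg : g ≫ d = 0) : ∃ g' : W ⟶ X, g' ≫ i = g :=
  (h.2 g hg).exists

lemma IsCoker.exists_desc {i : X ⟶ Y} {d : Y ⟶ Z} (h : IsCoker i d) {W : A} (g : Y ⟶ W)
    (hg : i ≫ g = 0) : ∃ g' : Z ⟶ W, d ≫ g' = g :=
  (h.2 g hg).exists

lemma _root_.CategoryTheory.IsPushout.exists_iso_of_isCoker {X' Y' Z' : A} {i : X ⟶ Y}
    {f : X ⟶ X'} {f' : Y ⟶ Y'} {i' : X' ⟶ Y'} (hPO : IsPushout i f f' i') {d : Y ⟶ Z}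
    {d' : Y' ⟶ Z'} (hd : IsCoker i d) (hd' : IsCoker i' d') : ∃ e : Z ≅ Z', d ≫ e.hom = f' ≫ d' := by
  have w : i ≫ d = f ≫ (0 : X' ⟶ Z) := by rw [hd.1, comp_zero]
  obtain ⟨c, hc⟩ := hd.exists_desc (f' ≫ d')
    (by rw [← Category.assoc, hPO.w, Category.assoc, hd'.1, comp_zero])
  obtain ⟨c', hc'⟩ := hd'.exists_desc (hPO.desc d 0 w) (hPO.inr_desc d 0 w)
  refine ⟨⟨c, c', hd.cancel_epi ?_, hd'.cancel_epi ?_⟩, hc⟩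
  · rw [← Category.assoc, hc, Category.assoc, hc', hPO.inl_desc, Category.comp_id]
  · apply hPO.hom_ext
    · rw [← Category.assoc, ← Category.assoc, Category.assoc f', hc', hPO.inl_desc, hc,
        Category.comp_id]
    · rw [← Category.assoc, ← Category.assoc, Category.assoc i', hc', hPO.inr_desc, zero_comp,
        Category.comp_id, hd'.1]

end Preadditive

section HomSurjective

variable {A : Type u} [Category.{v} A] {Y Z : A}

def HomSurjective (S : Set A) (d : Y ⟶ Z) : Prop :=
  ∀ S₀ ∈ S, Function.Surjective fun g : S₀ ⟶ Y => g ≫ d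

variable {S : Set A}

lemma homSurjective_id (Z : A) : HomSurjective S (𝟙 Z) :=
  fun _ _ g => ⟨g, Category.comp_id g⟩

lemma HomSurjective.comp {W : A} {d : Y ⟶ Z} {e : Z ⟶ W} (hd : HomSurjective S d)
    (he : HomSurjective S e) : HomSurjective S (d ≫ e) := by
  intro S₀ hS₀ g
  obtain ⟨g₁, rfl⟩ := he S₀ hS₀ g
  obtain ⟨g₂, rfl⟩ := hd S₀ hS₀ g₁
  exact ⟨g₂, (Category.assoc _ _ _).symm⟩

lemma HomSurjective.of_comp_eq {Y' Z' : A} {d : Y ⟶ Z} {d' : Y' ⟶ Z'} (hd : HomSurjective S d)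
    (f : Y ⟶ Y') (e : Z ≅ Z') (w : d ≫ e.hom = f ≫ d') : HomSurjective S d' := by
  intro S₀ hS₀ g
  obtain ⟨h, hh⟩ := hd S₀ hS₀ (g ≫ e.inv)
  refine ⟨h ≫ f, ?_⟩
  simp only [Category.assoc, ← w, reassoc_of% hh, Iso.inv_hom_id, Category.comp_id]

lemma HomSurjective.of_isPullback {Y' Z' : A} {d : Y ⟶ Z} {d' : Y' ⟶ Z'} {f' : Y' ⟶ Y}
    {f : Z' ⟶ Z} (hd : HomSurjective S d) (hPB : IsPullback d' f' f d) :
    HomSurjective S d' := by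
  intro S₀ hS₀ g
  obtain ⟨h, hh⟩ := hd S₀ hS₀ (g ≫ f)
  exact ⟨hPB.lift g h hh.symm, hPB.lift_fst g h hh.symm⟩

lemma HomSurjective.of_isKer [Preadditive A] {W Z' Z'' : A} {j : Y ⟶ W} {d : Y ⟶ Z}
    {d' : W ⟶ Z'} {d'' : W ⟶ Z''} {k : Z ⟶ Z''} {p : Z'' ⟶ Z'} (hkp : IsKer k p)
    (hk : d ≫ k = j ≫ d'') (hp : d'' ≫ p = d') (hd : HomSurjective S d)
    (hd' : HomSurjective S d') : HomSurjective S d'' := by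
  intro S₀ hS₀ g
  obtain ⟨h, hh : h ≫ d' = g ≫ p⟩ := hd' S₀ hS₀ (g ≫ p)
  obtain ⟨s, hs⟩ := hkp.exists_lift (g - h ≫ d'')
    (by rw [Preadditive.sub_comp, Category.assoc, hp, hh, sub_self])
  obtain ⟨r, rfl : r ≫ d = s⟩ := hd S₀ hS₀ s
  refine ⟨h + r ≫ j, show (h + r ≫ j) ≫ d'' = g from ?_⟩
  rw [Preadditive.add_comp, Category.assoc, ← hk, ← Category.assoc, hs, add_sub_cancel]

end HomSurjective

section Exact

variable {A : Type u} [Category.{v} A] [Preadditive A] (E : ExactStructure A) {X Y Z : A}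

lemma ExactStructure.rightAcyclic_iff {i : X ⟶ Y} {d : Y ⟶ Z} (h : E.IsConflation i d)
    (S : Set A) : RightAcyclic S i d ↔ HomSurjective S d := by
  have hker := E.ker_of_conflation h
  refine ⟨fun hS S₀ hS₀ => (hS S₀ hS₀).2.2, fun hS S₀ hS₀ => ⟨?_, ?_, hS S₀ hS₀⟩⟩
  · exact fun g g' e => hker.cancel_mono e
  · exact fun g hg => hker.exists_lift g hg

variable {W Z' Z'' : A} {i : X ⟶ Y} {j : Y ⟶ W} {d : Y ⟶ Z} {d' : W ⟶ Z'} {d'' : W ⟶ Z''}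
  {k : Z ⟶ Z''} {p : Z'' ⟶ Z'}

/-- Pulling `d` back along `a` reduces `a ≫ k = 0` to the injectivity of `j`. -/
lemma ExactStructure.eq_zero_of_comp_comparison_eq_zero (hid : E.IsConflation i d)
    (hjd : E.IsConflation j d') (hijd : E.IsConflation (i ≫ j) d'') (hk : d ≫ k = j ≫ d'')
    {T : A} (a : T ⟶ Z) (ha : a ≫ k = 0) : a = 0 := by
  obtain ⟨P, q, v, hPB, X₂, i₂, hq⟩ := E.ex2 d a ⟨X, i, hid⟩
  obtain ⟨w, hw⟩ := (E.ker_of_conflation hijd).exists_lift (v ≫ j)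
    (by rw [Category.assoc, ← hk, ← Category.assoc, ← hPB.w, Category.assoc, ha, comp_zero])
  have hv : w ≫ i = v := (E.ker_of_conflation hjd).cancel_mono (by rw [Category.assoc, hw])
  refine (E.coker_of_conflation hq).cancel_epi ?_
  rw [hPB.w, ← hv, Category.assoc, (E.ker_of_conflation hid).1, comp_zero, comp_zero]

/-- Half of Noether's `3 × 3` lemma. -/
lemma ExactStructure.isKer_comparison (hid : E.IsConflation i d) (hjd : E.IsConflation j d')
    (hijd : E.IsConflation (i ≫ j) d'') (hk : d ≫ k = j ≫ d'') (hp : d'' ≫ p = d') :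
    IsKer k p := by
  have hmono {T : A} (a : T ⟶ Z) : a ≫ k = 0 → a = 0 :=
    E.eq_zero_of_comp_comparison_eq_zero hid hjd hijd hk a
  have hkerj := E.ker_of_conflation hjd
  refine ⟨(E.coker_of_conflation hid).cancel_epi ?_, fun T t ht => ?_⟩
  · rw [reassoc_of% hk, hp, hkerj.1, comp_zero]
  refine existsUnique_of_exists_of_unique ?_ fun s s' hs hs' => ?_
  · obtain ⟨P, dt, f, hPB, Xt, it, hc⟩ := E.ex2 d'' t ⟨X, i ≫ j, hijd⟩
    have hsq : dt ≫ t = f ≫ d'' := hPB.w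
    obtain ⟨u, hu⟩ := hkerj.exists_lift f
      (by rw [← hp, ← Category.assoc, ← hsq, Category.assoc, ht, comp_zero])
    have hud : dt ≫ t = (u ≫ d) ≫ k := by rw [hsq, ← hu]; simp only [Category.assoc, hk]
    obtain ⟨s, hs⟩ := (E.coker_of_conflation hc).exists_desc (u ≫ d) (hmono _
      (by rw [Category.assoc, ← hud, ← Category.assoc, (E.ker_of_conflation hc).1, zero_comp]))
    refine ⟨s, (E.coker_of_conflation hc).cancel_epi ?_⟩
    rw [reassoc_of% hs, hud, Category.assoc]
  · rw [← sub_eq_zero]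
    exact hmono _ (by rw [Preadditive.sub_comp, hs, hs', sub_self])

def ExactStructure.rightAcyclic (S : Set A) : ExactStructure A where
  IsConflation X Y Z i d := E.IsConflation i d ∧ RightAcyclic S i d
  ker_of_conflation _ _ _ _ _ h := E.ker_of_conflation h.1
  coker_of_conflation _ _ _ _ _ h := E.coker_of_conflation h.1
  iso_closed := by
    rintro X Y Z X' Y' Z' i d i' d' eX eY eZ hi hd ⟨h, hS⟩
    have h' := E.iso_closed eX eY eZ hi hd h
    rw [E.rightAcyclic_iff h] at hS
    exact ⟨h', (E.rightAcyclic_iff h' S).2 (hS.of_comp_eq eY.hom eZ hd)⟩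
  ex0 Z hZ := by
    obtain ⟨X, i, h⟩ := E.ex0 hZ
    exact ⟨X, i, h, (E.rightAcyclic_iff h S).2 (homSurjective_id Z)⟩
  ex1 := by
    rintro Y Z W d e ⟨X, i, hd, hdS⟩ ⟨X', i', he, heS⟩
    obtain ⟨X'', i'', hde⟩ := E.ex1 ⟨X, i, hd⟩ ⟨X', i', he⟩
    rw [E.rightAcyclic_iff hd] at hdS
    rw [E.rightAcyclic_iff he] at heS
    exact ⟨X'', i'', hde, (E.rightAcyclic_iff hde S).2 (hdS.comp heS)⟩
  ex1op := by
    rintro X Y W i j ⟨Z, d, hid, hdS⟩ ⟨Z', d', hjd, hd'S⟩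
    obtain ⟨Z'', d'', hijd⟩ := E.ex1op ⟨Z, d, hid⟩ ⟨Z', d', hjd⟩
    rw [E.rightAcyclic_iff hid] at hdS
    rw [E.rightAcyclic_iff hjd] at hd'S
    obtain ⟨k, hk⟩ := (E.coker_of_conflation hid).exists_desc (j ≫ d'')
      (by rw [← Category.assoc, (E.ker_of_conflation hijd).1])
    obtain ⟨p, hp⟩ := (E.coker_of_conflation hijd).exists_desc d'
      (by rw [Category.assoc, (E.ker_of_conflation hjd).1, comp_zero])
    have hkp := E.isKer_comparison hid hjd hijd hk hp
    exact ⟨Z'', d'', hijd, (E.rightAcyclic_iff hijd S).2 (hdS.of_isKer hkp hk hp hd'S)⟩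
  ex2 := by
    rintro Y Z Z' d f ⟨X, i, hd, hdS⟩
    obtain ⟨Y', d', f', hPB, X', i', hd'⟩ := E.ex2 d f ⟨X, i, hd⟩
    rw [E.rightAcyclic_iff hd] at hdS
    exact ⟨Y', d', f', hPB, X', i', hd', (E.rightAcyclic_iff hd' S).2 (hdS.of_isPullback hPB)⟩
  ex2op := by
    rintro X Y X' i f ⟨Z, d, hid, hdS⟩
    obtain ⟨Y', i', f', hPO, Z', d', hid'⟩ := E.ex2op i f ⟨Z, d, hid⟩
    obtain ⟨e, he⟩ := hPO.exists_iso_of_isCoker (E.coker_of_conflation hid)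
      (E.coker_of_conflation hid')
    rw [E.rightAcyclic_iff hid] at hdS
    exact ⟨Y', i', f', hPO, Z', d', hid', (E.rightAcyclic_iff hid' S).2 (hdS.of_comp_eq f' e he)⟩

end Exact

theorem rightAcyclic_exactStructure_general
    {A : Type u} [Category.{v} A] [Preadditive A]
    (E : ExactStructure A) (S : Set A) :
    ∃ E' : ExactStructure A, ∀ ⦃X Y Z : A⦄ (i : X ⟶ Y) (d : Y ⟶ Z),
      E'.IsConflation i d ↔ (E.IsConflation i d ∧ RightAcyclic S i d) :=
  ⟨E.rightAcyclic S, fun _ _ _ _ _ => Iff.rfl⟩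

/-- **Lemma 5.2.** Let `(A, E)` be an exact category and `S ⊆ A` a full additive
subcategory.  The class `E'` of right `S`-acyclic conflations is again an exact
structure on `A`. -/
theorem rightAcyclic_exactStructure
    {A : Type u} [Category.{v} A] [Preadditive A] [HasZeroObject A] [HasBinaryBiproducts A]
    (E : ExactStructure A) (S : Set A) :
    ∃ E' : ExactStructure A, ∀ ⦃X Y Z : A⦄ (i : X ⟶ Y) (d : Y ⟶ Z),
      E'.IsConflation i d ↔ (E.IsConflation i d ∧ RightAcyclic S i d) :=
  rightAcyclic_exactStructure_general E S

end Paper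
end

section
/- Let R be a commutative noetherian ring, f ∈ R a regular element, and M an R-module with f · M = 0. Suppose 0 → P^1 →(d) P^0 →(π) M → 0 is a short exact sequence of R-modules with P^0 and P^1 finitely generated projective. Then there exists a unique R-linear map u: P^0 → P^1 with d ∘ u = f · id_{P^0}, and this u moreover satisfies u ∘ d = f · id_{P^1}; hence (u, d) is a matrix factorization of f whose cokernel coker(d) is isomorphic to M. -/
/-!
Since `f` kills `M = coker d`, the image of `f • id` lies in `range d`, so it factors uniquely
through the injective map `d` as `d ∘ u`. Then `d ∘ (u ∘ d) = f • d = d ∘ (f • id)`, and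
cancelling `d` gives `u ∘ d = f • id`.
-/

universe u

namespace LinearMap

variable {R N P Q : Type*} [CommSemiring R] [AddCommMonoid N] [AddCommMonoid P] [AddCommMonoid Q]
  [Module R N] [Module R P] [Module R Q]

theorem existsUnique_comp_eq_of_range_le {d : N →ₗ[R] P} (hd : Function.Injective d)
    {g : Q →ₗ[R] P} (hg : range g ≤ range d) : ∃! v : Q →ₗ[R] N, d ∘ₗ v = g := by
  let v := (LinearEquiv.ofInjective d hd).symm.toLinearMap ∘ₗ
    g.codRestrict _ fun x ↦ hg (mem_range_self g x)
  have hv : d ∘ₗ v = g := by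
    ext x
    simp [v]
  exact ⟨v, hv, fun w hw ↦ (cancel_left hd).1 (hw.trans hv.symm)⟩

theorem comp_eq_smul_id_of_comp_eq_smul_id {d : N →ₗ[R] P} (hd : Function.Injective d)
    {v : P →ₗ[R] N} {f : R} (hv : d ∘ₗ v = f • id) : v ∘ₗ d = f • id := by
  rw [← cancel_left hd, ← comp_assoc, hv, smul_comp, comp_smul, id_comp, comp_id]

theorem range_smul_id_le_of_exact {M : Type*} [AddCommMonoid M] [Module R M] {f : R}
    (hfM : ∀ m : M, f • m = 0) {d : N →ₗ[R] P} {π : P →ₗ[R] M} (hexact : range d = ker π) :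
    range (f • id : P →ₗ[R] P) ≤ range d := by
  rintro _ ⟨x, rfl⟩
  rw [hexact, mem_ker, smul_apply, id_apply, map_smul, hfM]

end LinearMap

theorem matrixFactorization_from_presentation_general
    (R : Type u) [CommRing R] (f : R)
    (M P0 P1 : Type u) [AddCommGroup M] [AddCommGroup P0] [AddCommGroup P1]
    [Module R M] [Module R P0] [Module R P1]
    (hfM : ∀ m : M, f • m = 0)
    (d : P1 →ₗ[R] P0) (π : P0 →ₗ[R] M)
    (hd : Function.Injective d) (hπ : Function.Surjective π)
    (hexact : LinearMap.range d = LinearMap.ker π) :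
    (∃! u : P0 →ₗ[R] P1, d ∘ₗ u = f • LinearMap.id) ∧
    (∀ u : P0 →ₗ[R] P1, d ∘ₗ u = f • LinearMap.id → u ∘ₗ d = f • LinearMap.id) ∧
    Nonempty ((P0 ⧸ LinearMap.range d) ≃ₗ[R] M) :=
  ⟨LinearMap.existsUnique_comp_eq_of_range_le hd (LinearMap.range_smul_id_le_of_exact hfM hexact),
    fun _ ↦ LinearMap.comp_eq_smul_id_of_comp_eq_smul_id hd,
    ⟨(Submodule.quotEquivOfEq _ _ hexact).trans (π.quotKerEquivOfSurjective hπ)⟩⟩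

/-- **Observation (Example 4.4).** Let `R` be a commutative noetherian ring, `f ∈ R` a
regular element and `M` an `R`-module killed by `f`.  Given a short exact sequence
`0 → P¹ →d P⁰ →π M → 0` with `P⁰`, `P¹` finitely generated projective, there is a
unique `R`-linear map `u : P⁰ → P¹` with `d ∘ u = f·id`; moreover `u ∘ d = f·id`, so
`(u, d)` is a matrix factorization of `f` with `coker d ≅ M`. -/
theorem matrixFactorization_from_presentation
    (R : Type u) [CommRing R] [IsNoetherianRing R] (f : R)
    (hf : Function.Injective (fun x : R => f * x))
    (M P0 P1 : Type u) [AddCommGroup M] [AddCommGroup P0] [AddCommGroup P1]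
    [Module R M] [Module R P0] [Module R P1]
    [Module.Finite R P0] [Module.Finite R P1]
    [Module.Projective R P0] [Module.Projective R P1]
    (hfM : ∀ m : M, f • m = 0)
    (d : P1 →ₗ[R] P0) (π : P0 →ₗ[R] M)
    (hd : Function.Injective d) (hπ : Function.Surjective π)
    (hexact : LinearMap.range d = LinearMap.ker π) :
    (∃! u : P0 →ₗ[R] P1, d ∘ₗ u = f • LinearMap.id) ∧
    (∀ u : P0 →ₗ[R] P1, d ∘ₗ u = f • LinearMap.id → u ∘ₗ d = f • LinearMap.id) ∧
    Nonempty ((P0 ⧸ LinearMap.range d) ≃ₗ[R] M) :=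
  matrixFactorization_from_presentation_general R f M P0 P1 hfM d π hd hπ hexact
end

section
/- Let A be an abelian category that is Frobenius, i.e., A has enough projective objects and enough injective objects and the class of projective objects coincides with the class of injective objects. Then the morphism category Mor(A) has enough projectives and enough injectives; an object α: X → Y of Mor(A) is projective if and only if it is isomorphic in Mor(A) to a direct sum (0 → P) ⊕ (Q →(id_Q) Q) with P, Q projective objects of A, and α is injective if and only if it is isomorphic to (P → 0) ⊕ (Q →(id_Q) Q) with P, Q projective (= injective) objects of A. -/
/-!
If `P` and `Q` are projective, the arrow `biprod.inr : Q ⟶ P ⊞ Q`, i.e. `(0 → P) ⊕ (Q = Q)`, is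
projective: a lifting problem is solved by lifting on `Q` in the source and on the free summand
`P` in the target. Projective covers of `α.left` and `α.right` assemble into an epimorphism from
such an arrow onto `α`, so there are enough projectives, and a projective `α` is a retract of this
cover. Passing to a retract keeps both components projective and the structure map split mono,
and a split mono `f : X ⟶ Y` is isomorphic, as an arrow, to `biprod.inr : X ⟶ cokernel f ⊞ X`,
where `cokernel f` is a retract of `Y`. Injectives are dual, with `biprod.snd : I ⊞ J ⟶ J` and
kernels.
-/

universe v u

open CategoryTheory Limits

namespace CategoryTheory

section

variable {T : Type*} [Category T]

namespace Arrow

instance preservesLimitsOfShape_rightFunc {J : Type*} [Category J] [HasLimitsOfShape J T] :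
    PreservesLimitsOfShape J (Arrow.rightFunc : Arrow T ⥤ T) where
  preservesLimit :=
    preservesLimit_of_preserves_limit_cone
      (Comma.coneOfPreservesIsLimit _ (limit.isLimit _) (limit.isLimit _)) (limit.isLimit _)

instance epi_left_of_epi [HasPushouts T] {f g : Arrow T} (φ : f ⟶ g) [Epi φ] : Epi φ.left :=
  leftFunc.map_epi φ

instance mono_right_of_mono [HasPullbacks T] {f g : Arrow T} (φ : f ⟶ g) [Mono φ] :
    Mono φ.right :=
  rightFunc.map_mono φ

lemma epi_of_epi_left_of_epi_right {f g : Arrow T} (φ : f ⟶ g) [Epi φ.left] [Epi φ.right] :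
    Epi φ :=
  ⟨fun _ _ h => hom_ext _ _ ((cancel_epi φ.left).1 (congrArg CommaMorphism.left h))
    ((cancel_epi φ.right).1 (congrArg CommaMorphism.right h))⟩

lemma mono_of_mono_left_of_mono_right {f g : Arrow T} (φ : f ⟶ g) [Mono φ.left]
    [Mono φ.right] : Mono φ :=
  ⟨fun _ _ h => hom_ext _ _ ((cancel_mono φ.left).1 (congrArg CommaMorphism.left h))
    ((cancel_mono φ.right).1 (congrArg CommaMorphism.right h))⟩

end Arrow

namespace RetractArrow

variable {X Y Z W : T} {f : X ⟶ Y} {g : Z ⟶ W}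

lemma isSplitMono (h : RetractArrow f g) [IsSplitMono g] : IsSplitMono f :=
  ⟨⟨⟨h.i.right ≫ retraction g ≫ h.r.left, by simp [← h.i_w_assoc]⟩⟩⟩

lemma isSplitEpi (h : RetractArrow f g) [IsSplitEpi g] : IsSplitEpi f :=
  ⟨⟨⟨h.i.right ≫ section_ g ≫ h.r.left, by simp [h.r_w]⟩⟩⟩

end RetractArrow

end

namespace Arrow

variable {C : Type*} [Category C] [HasZeroMorphisms C] [HasBinaryBiproducts C]

@[simps!]
noncomputable def homOfBiprodInr (α : Arrow C) {P Q : C} (p : P ⟶ α.right) (q : Q ⟶ α.left) :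
    Arrow.mk (biprod.inr : Q ⟶ P ⊞ Q) ⟶ α :=
  homMk q (biprod.desc p (q ≫ α.hom)) (by simp)

@[simps!]
noncomputable def homToBiprodSnd (α : Arrow C) {I J : C} (i : α.left ⟶ I) (j : α.right ⟶ J) :
    α ⟶ Arrow.mk (biprod.snd : I ⊞ J ⟶ J) :=
  homMk (biprod.lift i (α.hom ≫ j)) j (by simp)

instance (α : Arrow C) {P Q : C} (p : P ⟶ α.right) (q : Q ⟶ α.left) [Epi p] [Epi q] :
    Epi (homOfBiprodInr α p q) := by
  have : Epi (homOfBiprodInr α p q).left := by change Epi q; infer_instance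
  have : Epi (homOfBiprodInr α p q).right := by change Epi (biprod.desc p _); infer_instance
  exact epi_of_epi_left_of_epi_right _

instance (α : Arrow C) {I J : C} (i : α.left ⟶ I) (j : α.right ⟶ J) [Mono i] [Mono j] :
    Mono (homToBiprodSnd α i j) := by
  have : Mono (homToBiprodSnd α i j).left := by change Mono (biprod.lift i _); infer_instance
  have : Mono (homToBiprodSnd α i j).right := by change Mono j; infer_instance
  exact mono_of_mono_left_of_mono_right _

instance projective_mk_biprod_inr [HasPushouts C] (P Q : C) [Projective P] [Projective Q] :
    Projective (Arrow.mk (biprod.inr : Q ⟶ P ⊞ Q)) where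
  factors {E _} f e _ := by
    obtain ⟨q, hq⟩ := Projective.factors (P := Q) f.left e.left
    obtain ⟨p, hp⟩ := Projective.factors (P := P) (biprod.inl ≫ f.right) e.right
    refine ⟨homOfBiprodInr E p q, hom_ext _ _ (by simpa using hq) ?_⟩
    apply biprod.hom_ext'
    · simpa using hp
    · simp only [comp_right, mk_right, homOfBiprodInr_right, biprod.inr_desc_assoc,
        Category.assoc]
      rw [← Arrow.w e, reassoc_of% hq]
      exact Arrow.w f

instance injective_mk_biprod_snd [HasPullbacks C] (I J : C) [Injective I] [Injective J] :
    Injective (Arrow.mk (biprod.snd : I ⊞ J ⟶ J)) where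
  factors {_ Y} g f _ := by
    obtain ⟨j, hj⟩ := Injective.factors (J := J) g.right f.right
    obtain ⟨i, hi⟩ := Injective.factors (J := I) (g.left ≫ biprod.fst) f.left
    refine ⟨homToBiprodSnd Y i j, hom_ext _ _ ?_ (by simpa using hj)⟩
    apply biprod.hom_ext
    · simpa using hi
    · simp [hj]

instance [HasPushouts C] [EnoughProjectives C] : EnoughProjectives (Arrow C) where
  presentation α := ⟨{ p := _, f := homOfBiprodInr α (Projective.π _) (Projective.π _) }⟩

instance [HasPullbacks C] [EnoughInjectives C] : EnoughInjectives (Arrow C) where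
  presentation α := ⟨{ J := _, f := homToBiprodSnd α (Injective.ι _) (Injective.ι _) }⟩

noncomputable def retractBiprodInrOfProjective [HasPushouts C] [EnoughProjectives C]
    (α : Arrow C) [Projective α] : Retract α (Arrow.mk (biprod.inr :
      Projective.over α.left ⟶ Projective.over α.right ⊞ Projective.over α.left)) where
  i := Projective.factorThru (𝟙 α) (homOfBiprodInr α (Projective.π _) (Projective.π _))
  r := homOfBiprodInr α (Projective.π _) (Projective.π _)

noncomputable def retractBiprodSndOfInjective [HasPullbacks C] [EnoughInjectives C]
    (α : Arrow C) [Injective α] : Retract α (Arrow.mk (biprod.snd :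
      Injective.under α.left ⊞ Injective.under α.right ⟶ Injective.under α.right)) where
  i := homToBiprodSnd α (Injective.ι _) (Injective.ι _)
  r := Injective.factorThru (𝟙 α) (homToBiprodSnd α (Injective.ι _) (Injective.ι _))

end Arrow

section

variable {A : Type*} [Category A] [Abelian A] {X Y : A}

noncomputable def splittingOfIsSplitMono (f : X ⟶ Y) [IsSplitMono f] :
    (ShortComplex.mk f (cokernel.π f) (cokernel.condition f)).Splitting :=
  .ofExactOfRetraction _ (ShortComplex.exact_cokernel f) (retraction f) (by simp)
    (by dsimp; infer_instance)

noncomputable def splittingOfIsSplitEpi (f : X ⟶ Y) [IsSplitEpi f] :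
    (ShortComplex.mk (kernel.ι f) f (kernel.condition f)).Splitting :=
  .ofExactOfSection _ (ShortComplex.exact_kernel f) (section_ f) (by simp)
    (by dsimp; infer_instance)

noncomputable def retractCokernelOfIsSplitMono (f : X ⟶ Y) [IsSplitMono f] :
    Retract (cokernel f) Y where
  i := (splittingOfIsSplitMono f).s
  r := cokernel.π f
  retract := (splittingOfIsSplitMono f).s_g

noncomputable def retractKernelOfIsSplitEpi (f : X ⟶ Y) [IsSplitEpi f] :
    Retract (kernel f) X where
  i := kernel.ι f
  r := (splittingOfIsSplitEpi f).r
  retract := (splittingOfIsSplitEpi f).f_r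

namespace Arrow

noncomputable def isoMkBiprodInrOfIsSplitMono (f : X ⟶ Y) [IsSplitMono f] :
    Arrow.mk f ≅ Arrow.mk (biprod.inr : X ⟶ cokernel f ⊞ X) :=
  isoMk (Iso.refl X) ((splittingOfIsSplitMono f).isoBinaryBiproduct ≪≫ biprod.braiding _ _) (by
    apply biprod.hom_ext
    · simp
    · simpa using (splittingOfIsSplitMono f).f_r.symm)

noncomputable def isoMkBiprodSndOfIsSplitEpi (f : X ⟶ Y) [IsSplitEpi f] :
    Arrow.mk f ≅ Arrow.mk (biprod.snd : kernel f ⊞ Y ⟶ Y) :=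
  isoMk (splittingOfIsSplitEpi f).isoBinaryBiproduct (Iso.refl Y) (by simp)

theorem projective_iff_nonempty_iso_mk_biprod_inr [EnoughProjectives A] (α : Arrow A) :
    Projective α ↔ ∃ P Q : A, Projective P ∧ Projective Q ∧
      Nonempty (α ≅ Arrow.mk (biprod.inr : Q ⟶ P ⊞ Q)) := by
  refine ⟨fun _ => ?_, fun ⟨P, Q, _, _, ⟨e⟩⟩ => Projective.of_iso e.symm inferInstance⟩
  have h : RetractArrow α.hom _ := retractBiprodInrOfProjective α
  have : IsSplitMono α.hom := h.isSplitMono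
  have : Projective α.right := h.right.projective
  exact ⟨cokernel α.hom, α.left, (retractCokernelOfIsSplitMono α.hom).projective,
    h.left.projective, ⟨isoMkBiprodInrOfIsSplitMono α.hom⟩⟩

theorem injective_iff_nonempty_iso_mk_biprod_snd [EnoughInjectives A] (α : Arrow A) :
    Injective α ↔ ∃ I J : A, Injective I ∧ Injective J ∧
      Nonempty (α ≅ Arrow.mk (biprod.snd : I ⊞ J ⟶ J)) := by
  refine ⟨fun _ => ?_, fun ⟨I, J, _, _, ⟨e⟩⟩ => Injective.of_iso e.symm inferInstance⟩
  have h : RetractArrow α.hom _ := retractBiprodSndOfInjective α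
  have : IsSplitEpi α.hom := h.isSplitEpi
  have : Injective α.left := h.left.injective
  exact ⟨kernel α.hom, α.right, (retractKernelOfIsSplitEpi α.hom).injective,
    h.right.injective, ⟨isoMkBiprodSndOfIsSplitEpi α.hom⟩⟩

end Arrow

end

end CategoryTheory

/-- **Observation (Section 5, cf. [RS06, Section 2]).** Let `A` be a Frobenius abelian
category (enough projectives, enough injectives, and projectives = injectives).  Then
the morphism category `Mor(A)` has enough projectives and enough injectives; its
projective objects are exactly those isomorphic to `(0 → P) ⊕ (Q →id Q)` with `P, Q`
projective, and its injective objects are exactly those isomorphic to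
`(P → 0) ⊕ (Q →id Q)` with `P, Q` projective (= injective). -/
theorem morphism_category_projectives_injectives
    {A : Type u} [Category.{v} A] [Abelian A]
    [EnoughProjectives A] [EnoughInjectives A]
    (hPI : ∀ X : A, Projective X ↔ Injective X) :
    EnoughProjectives (Arrow A) ∧ EnoughInjectives (Arrow A) ∧
    (∀ α : Arrow A, Projective α ↔ ∃ P Q : A, Projective P ∧ Projective Q ∧
      Nonempty (α ≅ Arrow.mk (biprod.inr : Q ⟶ P ⊞ Q))) ∧
    (∀ α : Arrow A, Injective α ↔ ∃ P Q : A, Projective P ∧ Projective Q ∧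
      Nonempty (α ≅ Arrow.mk (biprod.snd : P ⊞ Q ⟶ Q))) := by
  refine ⟨inferInstance, inferInstance, Arrow.projective_iff_nonempty_iso_mk_biprod_inr,
    fun α => ?_⟩
  simpa only [hPI] using Arrow.injective_iff_nonempty_iso_mk_biprod_snd α
end

section
/- Let A be an abelian category, α: X → Y a morphism, i: K → X a kernel of α, I an object, j: K → I a monomorphism, and ī: X → I a morphism with ī ∘ i = j. Then the induced morphism (α, ī): X → Y ⊕ I into the biproduct (with components α and ī) is a monomorphism. -/
universe v u

open CategoryTheory Limits

theorem mono_biprod_lift_of_isKernel_of_mono_comp {C : Type u} [Category.{v} C] [Preadditive C]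
    {X Y Z K : C} [HasBinaryBiproduct Y Z] {α : X ⟶ Y} {i : K ⟶ X} {w : i ≫ α = 0}
    (hker : IsLimit (KernelFork.ofι i w)) (f : X ⟶ Z) [Mono (i ≫ f)] :
    Mono (biprod.lift α f) := by
  rw [Preadditive.mono_iff_cancel_zero]
  intro W g hg
  have hgα : g ≫ α = 0 := by simpa using hg =≫ biprod.fst
  have hgf : g ≫ f = 0 := by simpa using hg =≫ biprod.snd
  obtain ⟨l, hl : l ≫ i = g⟩ := KernelFork.IsLimit.lift' hker g hgα
  have hl0 : l = 0 := zero_of_comp_mono (i ≫ f) (by rw [← Category.assoc, hl, hgf])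
  rw [← hl, hl0, zero_comp]

/-- **Observation (Section 5, minimal monomorphisms [RS06]).** Let `A` be an abelian
category, `α : X ⟶ Y` a morphism, `i : K ⟶ X` a kernel of `α`, `j : K ⟶ I` a
monomorphism and `ibar : X ⟶ I` with `ibar ∘ i = j`.  Then the induced morphism
`(α, ibar) : X ⟶ Y ⊕ I` is a monomorphism.  (For `j : K ⟶ I(K)` an injective hull this
is the minimal monomorphism `Mimo(α)`.) -/
theorem mimo_mono
    {A : Type u} [Category.{v} A] [Abelian A]
    {X Y K I : A} (α : X ⟶ Y) (i : K ⟶ X) (w : i ≫ α = 0)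
    (hker : IsLimit (KernelFork.ofι i w))
    (j : K ⟶ I) (hj : Mono j) (ibar : X ⟶ I) (hibar : i ≫ ibar = j) :
    Mono (biprod.lift α ibar) := by
  subst hibar
  exact mono_biprod_lift_of_isKernel_of_mono_comp hker ibar
end

section
/- Let A be an abelian category, α: X → Y a morphism, π: Y → C a cokernel of α, P an injective object, and ι: C → P a monomorphism. Then the morphism (0, ι ∘ π): α → (0 → P) in the morphism category Mor(A) is a left approximation of α with respect to objects of the form (0 → Q) with Q injective: every morphism in Mor(A) from α to an object (0 → Q) with Q injective factors through (0, ι ∘ π). -/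
universe v u

open CategoryTheory Limits ZeroObject

namespace CategoryTheory

lemma exists_eq_comp_cokernel_comp_mono {A : Type u} [Category.{v} A] [HasZeroMorphisms A]
    {X Y C P Q : A} {α : X ⟶ Y} {π : Y ⟶ C} {w : α ≫ π = 0}
    (hcoker : IsColimit (CokernelCofork.ofπ π w)) (ι : C ⟶ P) [Mono ι] [Injective Q]
    (g : Y ⟶ Q) (hg : α ≫ g = 0) : ∃ h : P ⟶ Q, π ≫ ι ≫ h = g := by
  obtain ⟨k, hk⟩ := CokernelCofork.IsColimit.desc' hcoker g hg
  obtain ⟨h, hh⟩ := Injective.factors k ι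
  exact ⟨h, by rw [hh]; exact hk⟩

lemma Arrow.hom_ext_of_isZero_left {T : Type u} [Category.{v} T] {a b : Arrow T}
    (hb : IsZero b.left) {φ ψ : a ⟶ b} (h : φ.right = ψ.right) : φ = ψ :=
  Arrow.hom_ext _ _ (hb.eq_of_tgt _ _) h

end CategoryTheory

/-- **Observation (Section 5).** Let `A` be an abelian category, `α : X ⟶ Y` a
morphism, `π : Y ⟶ C` a cokernel of `α`, `P` an injective object and `ι : C ⟶ P` a
monomorphism.  Then `(0, ι ∘ π) : α ⟶ (0 → P)` is a left approximation of `α` in the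
morphism category `Mor(A)` with respect to the objects `(0 → Q)` with `Q` injective. -/
theorem left_approximation_in_morphism_category
    {A : Type u} [Category.{v} A] [Abelian A]
    {X Y C : A} (α : X ⟶ Y) (π : Y ⟶ C) (w : α ≫ π = 0)
    (hcoker : IsColimit (CokernelCofork.ofπ π w))
    (P : A) (ι : C ⟶ P) (hι : Mono ι) :
    ∀ (Q : A), Injective Q → ∀ (φ : Arrow.mk α ⟶ Arrow.mk (0 : (0 : A) ⟶ Q)),
      ∃ ψ : Arrow.mk (0 : (0 : A) ⟶ P) ⟶ Arrow.mk (0 : (0 : A) ⟶ Q),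
        Arrow.homMk (u := (0 : X ⟶ (0 : A))) (v := π ≫ ι)
          (by simp only [Arrow.mk_hom]; rw [reassoc_of% w]; simp) ≫ ψ = φ := by
  intro Q hQ φ
  have hφ : α ≫ φ.right = 0 := by simpa using φ.w.symm
  obtain ⟨h, hh⟩ := exists_eq_comp_cokernel_comp_mono (Q := Q) hcoker ι φ.right hφ
  refine ⟨Arrow.homMk (u := 0) (v := h) (by simp), ?_⟩
  exact Arrow.hom_ext_of_isZero_left (isZero_zero A) (by simpa using hh)
end
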